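/- Let φ : A* → M be a monoid homomorphism into a finite monoid M. The set S of words in A* admitting no good factorization with respect to φ is a submonoid of A*: the empty word has no good factorization, and if x and y have no good factorizations, then neither does xy. -/

import Mathlib

/-- Green `R`-quasi-order on a monoid: `s ≤_R t` iff `s ∈ tM`. -/
def RLe {M : Type*} [Monoid M] (s t : M) : Prop := ∃ x, s = t * x

/-- Strict Green `R`-order. -/
def RLt {M : Type*} [Monoid M] (s t : M) : Prop := RLe s t ∧ ¬ RLe t s

/-- Green `L`-quasi-order on a monoid: `s ≤_L t` iff `s ∈ Mt`. -/
def LLe {M : Type*} [Monoid M] (s t : M) : Prop := ∃ x, s = x * t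

/-- Strict Green `L`-order. -/
def LLt {M : Type*} [Monoid M] (s t : M) : Prop := LLe s t ∧ ¬ LLe t s

/-- `(x₀, a, x₁)` is a good factorization with respect to `φ`:
`φ(x₀a) <_R φ(x₀)` and `φ(ax₁) <_L φ(x₁)`. -/
def GoodFact {A M : Type*} [Monoid M] (φ : FreeMonoid A →* M)
    (x₀ : FreeMonoid A) (a : A) (x₁ : FreeMonoid A) : Prop :=
  RLt (φ (x₀ * FreeMonoid.of a)) (φ x₀) ∧ LLt (φ (FreeMonoid.of a * x₁)) (φ x₁)

/-- `(x₀, a, x₁)` is a good factorization of the word `w` with respect to `φ`. -/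
def GoodFactOf {A M : Type*} [Monoid M] (φ : FreeMonoid A →* M)
    (w x₀ : FreeMonoid A) (a : A) (x₁ : FreeMonoid A) : Prop :=
  w = x₀ * FreeMonoid.of a * x₁ ∧ GoodFact φ x₀ a x₁

/-- `w` admits no good factorization with respect to `φ`. -/
def HasNoGoodFact {A M : Type*} [Monoid M] (φ : FreeMonoid A →* M) (w : FreeMonoid A) : Prop :=
  ∀ (x₀ : FreeMonoid A) (a : A) (x₁ : FreeMonoid A), ¬ GoodFactOf φ w x₀ a x₁

/-! A letter of a factorization of `xy` lies either in `x` or in `y`, and a good factorization of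
`xy` restricts to one of that factor: `φ(za) ≤_R φ(z)` always holds, while `φ(z) ≤_R φ(za)` would
give `φ(xz) ≤_R φ(xza)` by left multiplication; dually on the `L` side. -/

section Green

variable {M : Type*} [Monoid M] {s t : M}

theorem rLe_mul_right (m : M) : RLe (s * m) s := ⟨m, rfl⟩

theorem lLe_mul_left (m : M) : LLe (m * s) s := ⟨m, rfl⟩

theorem RLe.mul_left (h : RLe s t) (m : M) : RLe (m * s) (m * t) := by
  obtain ⟨x, rfl⟩ := h
  exact ⟨x, (mul_assoc m t x).symm⟩

theorem LLe.mul_right (h : LLe s t) (m : M) : LLe (s * m) (t * m) := by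
  obtain ⟨x, rfl⟩ := h
  exact ⟨x, mul_assoc x t m⟩

theorem RLt.of_mul_left {m : M} (h : RLt (m * s) (m * t)) (hst : RLe s t) : RLt s t :=
  ⟨hst, fun hts => h.2 (hts.mul_left m)⟩

theorem LLt.of_mul_right {m : M} (h : LLt (s * m) (t * m)) (hst : LLe s t) : LLt s t :=
  ⟨hst, fun hts => h.2 (hts.mul_right m)⟩

end Green

theorem FreeMonoid.exists_of_mul_eq_mul_of_mul {A : Type*} {x y x₀ x₁ : FreeMonoid A} {a : A}
    (h : x * y = x₀ * of a * x₁) :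
    (∃ z, x = x₀ * of a * z ∧ x₁ = z * y) ∨ ∃ z, x₀ = x * z ∧ y = z * of a * x₁ := by
  replace h : x.toList ++ y.toList = x₀.toList ++ a :: x₁.toList := by
    simpa using congrArg toList h
  rcases List.append_eq_append_iff.mp h with ⟨z, hx, hy⟩ | ⟨z, hx, hy⟩
  · exact .inr ⟨ofList z, toList.injective hx, toList.injective (by simp [hy])⟩
  · rcases List.cons_eq_append_iff.mp hy with ⟨rfl, hy⟩ | ⟨z, rfl, hx₁⟩
    · exact .inr ⟨1, toList.injective (by simp [hx]), toList.injective (by simp [hy])⟩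
    · exact .inl ⟨ofList z, toList.injective (by simp [hx]), toList.injective hx₁⟩

section GoodFact

variable {A M : Type*} [Monoid M] {φ : FreeMonoid A →* M}

theorem GoodFact.of_mul_right {x₀ z y : FreeMonoid A} {a : A} (h : GoodFact φ x₀ a (z * y)) :
    GoodFact φ x₀ a z := by
  obtain ⟨hR, hL⟩ := h
  refine ⟨hR, ?_⟩
  simp only [map_mul] at hL ⊢
  rw [← mul_assoc] at hL
  exact hL.of_mul_right (lLe_mul_left _)

theorem GoodFact.of_mul_left {x z x₁ : FreeMonoid A} {a : A} (h : GoodFact φ (x * z) a x₁) :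
    GoodFact φ z a x₁ := by
  obtain ⟨hR, hL⟩ := h
  refine ⟨?_, hL⟩
  simp only [map_mul] at hR ⊢
  rw [mul_assoc] at hR
  exact hR.of_mul_left (rLe_mul_right _)

variable (φ) in
theorem hasNoGoodFact_one : HasNoGoodFact φ 1 := fun x₀ a x₁ h => by
  simpa [eq_comm] using h.1

theorem HasNoGoodFact.mul {x y : FreeMonoid A} (hx : HasNoGoodFact φ x) (hy : HasNoGoodFact φ y) :
    HasNoGoodFact φ (x * y) := by
  rintro x₀ a x₁ ⟨hxy, hgood⟩
  rcases FreeMonoid.exists_of_mul_eq_mul_of_mul hxy with ⟨z, rfl, rfl⟩ | ⟨z, rfl, rfl⟩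
  · exact hx x₀ a z ⟨rfl, hgood.of_mul_right⟩
  · exact hy z a x₁ ⟨rfl, hgood.of_mul_left⟩

end GoodFact

theorem noGoodFact_submonoid_general {A M : Type*} [Monoid M] (φ : FreeMonoid A →* M) :
    HasNoGoodFact φ 1 ∧
      ∀ x y : FreeMonoid A, HasNoGoodFact φ x → HasNoGoodFact φ y →
        HasNoGoodFact φ (x * y) :=
  ⟨hasNoGoodFact_one φ, fun _ _ => HasNoGoodFact.mul⟩

theorem noGoodFact_submonoid {A M : Type*} [Monoid M] [Finite M] (φ : FreeMonoid A →* M) :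
    HasNoGoodFact φ 1 ∧
      ∀ x y : FreeMonoid A, HasNoGoodFact φ x → HasNoGoodFact φ y →
        HasNoGoodFact φ (x * y) :=
  noGoodFact_submonoid_general φ
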